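/- Let X₁, …, X_m be subsets of the vertex set of a connected graph G with m ≥ 2 and d_G(X_i, X_j) ≥ D ≥ 6 for all i ≠ j ∈ [m]. For each i ∈ [m], let Q_i be a shortest path in G from X_i to ⋃_{j≠i} X_j, and let Z be the set of vertices of G at distance at least 2 from ⋃_{i∈[m]} X_i. Then the subpaths Q_i′ of Q_i consisting of the vertices at positions 2 through (D−2)/2 along Q_i (from the X_i end) are pairwise vertex-disjoint, lie entirely in Z, and hence |Z| ≥ ((D−4)/2) · m. -/

import Mathlib

open Set

/-! ## List colorings -/

/-- `φ` is a proper coloring of `G` from the lists `L`. -/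
def HasLColoring {V : Type} (G : SimpleGraph V) (L : V → Finset ℕ) : Prop :=
  ∃ φ : V → ℕ, (∀ v, φ v ∈ L v) ∧ ∀ ⦃u v⦄, G.Adj u v → φ u ≠ φ v

/-- `φ : V → ℕ` restricts to a proper `L`-coloring of the subgraph `H`. -/
def IsLColoringOn {V : Type} {G : SimpleGraph V} (H : G.Subgraph) (L : V → Finset ℕ)
    (φ : V → ℕ) : Prop :=
  (∀ v ∈ H.verts, φ v ∈ L v) ∧ ∀ ⦃u v⦄, H.Adj u v → φ u ≠ φ v

/-- An `L`-coloring `φ` of `T` extends to an `L`-coloring of `H`. -/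
def ExtendsToIn {V : Type} {G : SimpleGraph V} (T H : G.Subgraph) (L : V → Finset ℕ)
    (φ : V → ℕ) : Prop :=
  ∃ ψ : V → ℕ, IsLColoringOn H L ψ ∧ ∀ v ∈ T.verts, ψ v = φ v

/-- `H` is `T`-critical with respect to `L` (inside the ambient graph `G`):
`T` is a proper subgraph of `H` and for every proper subgraph `H'` of `H` containing `T`
there is an `L`-coloring of `T` that extends to `H'` but not to `H`. -/
def IsCriticalIn {V : Type} {G : SimpleGraph V} (L : V → Finset ℕ) (T H : G.Subgraph) : Prop :=
  T ≤ H ∧ T ≠ H ∧ ∀ H' : G.Subgraph, T ≤ H' → H' < H →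
    ∃ φ : V → ℕ, IsLColoringOn T L φ ∧ ExtendsToIn T H' L φ ∧ ¬ ExtendsToIn T H L φ

/-! ## Plane embeddings -/

/-- A plane embedding of the graph `G`: vertices are distinct points of `ℝ²`, each edge is
a simple arc between the points of its two ends, arcs are internally disjoint from each other
and from the vertex points. -/
structure PlaneEmbedding {V : Type} (G : SimpleGraph V) where
  vtx : V → ℝ × ℝ
  vtx_inj : Function.Injective vtx
  arc : Sym2 V → ℝ → ℝ × ℝ
  arc_cont : ∀ e ∈ G.edgeSet, ContinuousOn (arc e) (Set.Icc 0 1)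
  arc_injOn : ∀ e ∈ G.edgeSet, Set.InjOn (arc e) (Set.Icc 0 1)
  arc_ends : ∀ u v : V, G.Adj u v →
    (arc s(u, v) 0 = vtx u ∧ arc s(u, v) 1 = vtx v) ∨
    (arc s(u, v) 0 = vtx v ∧ arc s(u, v) 1 = vtx u)
  arc_int_avoid_vtx : ∀ e ∈ G.edgeSet, ∀ w : V, vtx w ∉ arc e '' Set.Ioo 0 1
  arc_int_disjoint : ∀ e ∈ G.edgeSet, ∀ f ∈ G.edgeSet, e ≠ f →
    (arc e '' Set.Ioo 0 1) ∩ (arc f '' Set.Ioo 0 1) = ∅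

namespace PlaneEmbedding

variable {V : Type} {G : SimpleGraph V}

/-- The set of points of the plane used by the drawing of the subgraph `H`. -/
def subImage (ρ : PlaneEmbedding G) (H : G.Subgraph) : Set (ℝ × ℝ) :=
  (ρ.vtx '' H.verts) ∪ ⋃ e ∈ H.edgeSet, ρ.arc e '' Set.Icc 0 1

/-- The set of points of the plane used by the drawing of `G`. -/
def image (ρ : PlaneEmbedding G) : Set (ℝ × ℝ) := ρ.subImage ⊤

/-- A face of the embedding: a connected component of the complement of the drawing. -/
def IsFace (ρ : PlaneEmbedding G) (F : Set (ℝ × ℝ)) : Prop :=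
  ∃ x : ℝ × ℝ, x ∉ ρ.image ∧ F = connectedComponentIn (ρ.image)ᶜ x

/-- The outer (infinite) face: the unbounded face. -/
def IsOuterFace (ρ : PlaneEmbedding G) (F : Set (ℝ × ℝ)) : Prop :=
  ρ.IsFace F ∧ ¬ Bornology.IsBounded F

/-- The boundary graph `∂_G f` of a face `f`: the subgraph of `G` consisting of the
vertices and edges drawn on the boundary of the face. -/
def faceBoundary (ρ : PlaneEmbedding G) (F : Set (ℝ × ℝ)) : G.Subgraph where
  verts := {v | ρ.vtx v ∈ closure F}
  Adj u v := G.Adj u v ∧ ρ.arc s(u, v) '' Set.Icc 0 1 ⊆ closure F ∧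
    ρ.vtx u ∈ closure F ∧ ρ.vtx v ∈ closure F
  adj_sub h := h.1
  edge_vert h := h.2.2.1
  symm := by
    constructor
    intro u v h
    exact ⟨h.1.symm, by rw [Sym2.eq_swap]; exact h.2.1, h.2.2.2, h.2.2.1⟩

/-- Vertices drawn inside a bounded region enclosed by the drawing of `J`. -/
def enclosedVerts (ρ : PlaneEmbedding G) (J : G.Subgraph) : Set V :=
  {w | ρ.vtx w ∉ ρ.subImage J ∧
    Bornology.IsBounded (connectedComponentIn (ρ.subImage J)ᶜ (ρ.vtx w))}

end PlaneEmbedding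

/-! ## Restricted faces and sets -/

/-- `P` is a path of length at most one (a single vertex or a single edge), as a subgraph. -/
def IsShortPathSubgraph {V : Type} (G : SimpleGraph V) (P : G.Subgraph) : Prop :=
  (∃ u, P.verts = {u} ∧ P.edgeSet = ∅) ∨
  (∃ u v, G.Adj u v ∧ P.verts = {u, v} ∧ P.edgeSet = {s(u, v)})

/-- A face `F` is restricted under `L`: there is a path `P` of length at most one in the
boundary of `F` such that every boundary vertex off `P` has a list of size at least `3`,
vertices of `P` have nonempty lists, and `P` has an `L`-coloring. -/
def FaceRestricted {V : Type} {G : SimpleGraph V} (ρ : PlaneEmbedding G)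
    (F : Set (ℝ × ℝ)) (L : V → Finset ℕ) : Prop :=
  ∃ P : G.Subgraph, P ≤ ρ.faceBoundary F ∧ IsShortPathSubgraph G P ∧
    (∀ v ∈ (ρ.faceBoundary F).verts, v ∉ P.verts → 3 ≤ (L v).card) ∧
    (∀ v ∈ P.verts, 1 ≤ (L v).card) ∧
    ∃ φ : V → ℕ, IsLColoringOn P L φ

/-- A set `X` of vertices is restricted under `L`: there are a face `F` and a path `P` of
length at most one in the boundary of `F` such that every vertex of `X` has a list of size at
least `3`, vertices of `P` have nonempty lists, and `P` has an `L`-coloring. -/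
def SetRestricted {V : Type} {G : SimpleGraph V} (ρ : PlaneEmbedding G)
    (L : V → Finset ℕ) (X : Set V) : Prop :=
  ∃ F : Set (ℝ × ℝ), ρ.IsFace F ∧
    ∃ P : G.Subgraph, P ≤ ρ.faceBoundary F ∧ IsShortPathSubgraph G P ∧
      (∀ v ∈ X, 3 ≤ (L v).card) ∧
      (∀ v ∈ P.verts, 1 ≤ (L v).card) ∧
      ∃ φ : V → ℕ, IsLColoringOn P L φ

/-! ## Canvases -/

/-- `(G, S, L)` (together with the embedding `ρ` whose outer face is `F`) is a canvas. -/
def IsCanvas {V : Type} {G : SimpleGraph V} (ρ : PlaneEmbedding G) (F : Set (ℝ × ℝ))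
    (S : G.Subgraph) (L : V → Finset ℕ) : Prop :=
  G.Connected ∧ ρ.IsOuterFace F ∧ S ≤ ρ.faceBoundary F ∧
  (∀ v, v ∉ (ρ.faceBoundary F).verts → 5 ≤ (L v).card) ∧
  (∀ v, v ∉ S.verts → 3 ≤ (L v).card) ∧
  ∃ φ : V → ℕ, IsLColoringOn S L φ

/-- An essential cutvertex: `v` is a cutvertex, and whenever `v` divides `G` into
`G₁, G₂ ≠ G` with `V(G₁) ∩ V(G₂) = {v}` and `G₁ ∪ G₂ = G`, both sides meet `S` off `v`. -/
def EssentialCutvertex {V : Type} (G : SimpleGraph V) (S : G.Subgraph) (v : V) : Prop :=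
  (∃ G₁ G₂ : G.Subgraph, G₁ ⊔ G₂ = ⊤ ∧ G₁ ≠ ⊤ ∧ G₂ ≠ ⊤ ∧ G₁.verts ∩ G₂.verts = {v}) ∧
  ∀ G₁ G₂ : G.Subgraph, G₁ ⊔ G₂ = ⊤ → G₁ ≠ ⊤ → G₂ ≠ ⊤ → G₁.verts ∩ G₂.verts = {v} →
    (S.verts ∩ (G₁.verts \ {v})).Nonempty ∧ (S.verts ∩ (G₂.verts \ {v})).Nonempty

/-- `P'` is a span with an exterior `E`: `P'` is a path whose ends have lists of size
less than five, and there is a path `δ` between the ends of `P'` lying in the outer walk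
whose interior contains neither a vertex of `S` nor an essential cutvertex;
`E = V(δ) ∪ Int(P' ∪ δ)`. -/
def IsSpanWithExt {V : Type} {G : SimpleGraph V} (ρ : PlaneEmbedding G) (F : Set (ℝ × ℝ))
    (S : G.Subgraph) (L : V → Finset ℕ) (P' : G.Subgraph) (E : Set V) : Prop :=
  ∃ (u v : V) (p : G.Walk u v), p.IsPath ∧ p.toSubgraph = P' ∧
    (L u).card < 5 ∧ (L v).card < 5 ∧
    ∃ d : G.Walk u v, d.IsPath ∧ d.toSubgraph ≤ ρ.faceBoundary F ∧
      (∀ w ∈ d.support, w ≠ u → w ≠ v → w ∉ S.verts ∧ ¬ EssentialCutvertex G S w) ∧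
      E = {w | w ∈ d.support} ∪ ρ.enclosedVerts (P' ⊔ d.toSubgraph)

/-- A vertex is superfluous if it is not in `S` and lies in the exterior of some span on
three vertices. -/
def Superfluous {V : Type} {G : SimpleGraph V} (ρ : PlaneEmbedding G) (F : Set (ℝ × ℝ))
    (S : G.Subgraph) (L : V → Finset ℕ) (v : V) : Prop :=
  v ∉ S.verts ∧ ∃ (P' : G.Subgraph) (E : Set V),
    IsSpanWithExt ρ F S L P' E ∧ P'.verts.ncard = 3 ∧ v ∈ E

/-- The vertex set of the truncation `G*`: the substantial (non-superfluous) vertices. -/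
def truncVerts {V : Type} {G : SimpleGraph V} (ρ : PlaneEmbedding G) (F : Set (ℝ × ℝ))
    (S : G.Subgraph) (L : V → Finset ℕ) : Set V :=
  {v | ¬ Superfluous ρ F S L v}

/-- `S` is a disjoint union of paths: max degree at most two and no cycles. -/
def IsDisjointUnionOfPaths {V : Type} {G : SimpleGraph V} (S : G.Subgraph) : Prop :=
  (∀ v ∈ S.verts, (S.neighborSet v).ncard ≤ 2) ∧
  ∀ (u : V) (w : G.Walk u u), w.IsCycle → ¬ w.toSubgraph ≤ S

/-! ## Steiner trees -/

/-- `T` is an optimal Steiner tree for `S` in `G`: a connected subgraph containing `S`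
with as few edges as possible. -/
def IsOptimalSteinerTree {V : Type} (G : SimpleGraph V) (S : Set V) (T : G.Subgraph) : Prop :=
  T.Connected ∧ S ⊆ T.verts ∧
  ∀ T' : G.Subgraph, T'.Connected → S ⊆ T'.verts → T.edgeSet.ncard ≤ T'.edgeSet.ncard

/-- A branch vertex of `T` with respect to `S`: a vertex of `T` that is in `S` or does not
have degree exactly two in `T`. These are the vertices kept when suppressing degree-two
vertices not in `S`. -/
def IsBranchVertex {V : Type} {G : SimpleGraph V} (T : G.Subgraph) (S : Set V) (v : V) : Prop :=
  v ∈ T.verts ∧ (v ∈ S ∨ (T.neighborSet v).ncard ≠ 2)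

/-- A seam of `T` (with respect to `S`): a nontrivial path in `T` whose ends are branch
vertices and whose internal vertices are not branch vertices. -/
def IsSeamWalk {V : Type} {G : SimpleGraph V} (T : G.Subgraph) (S : Set V) {u v : V}
    (p : G.Walk u v) : Prop :=
  p.IsPath ∧ 1 ≤ p.length ∧ p.toSubgraph ≤ T ∧
  IsBranchVertex T S u ∧ IsBranchVertex T S v ∧
  ∀ w ∈ p.support, w ≠ u → w ≠ v → ¬ IsBranchVertex T S w

/-! A vertex at position `k` of `Q_i` is joined to `X_i` by the first `k` edges of `Q_i`. If it
were within distance `l` of some `X_j`, `j ≠ i`, we would get a walk from `X_i` to `X_j` of length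
`k + l`, so `k + l ≥ D`; this makes the `Q_i'` pairwise disjoint and keeps them at distance at
least `2` from every other `X_j`. If it were within distance `l < k` of `X_i`, the remaining
`|Q_i| - k` edges of `Q_i` would give a walk from `X_i` to `⋃_{j≠i} X_j` shorter than `Q_i`.
Each `Q_i'` is a segment of a path, so it has `(D - 2)/2 - 1 ≥ (D - 4)/2` vertices. -/

namespace SimpleGraph.Walk

variable {V : Type*} {G : SimpleGraph V}

lemma le_add_length_of_getVert {a b x : V} {D : ℕ} (p : G.Walk a b)
    (hfar : ∀ w : G.Walk a x, D ≤ w.length) {k : ℕ} (w : G.Walk (p.getVert k) x) :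
    D ≤ k + w.length := by
  have h := hfar ((p.take k).append w)
  rw [length_append, take_length] at h
  omega

lemma le_length_of_getVert_of_shortest {a b x : V} (p : G.Walk a b)
    (hshort : ∀ w : G.Walk x b, p.length ≤ w.length) {k : ℕ} (hk : k ≤ p.length)
    (w : G.Walk (p.getVert k) x) : k ≤ w.length := by
  have h := hshort (w.reverse.append (p.drop k))
  rw [length_append, length_reverse, drop_length] at h
  omega

lemma IsPath.ncard_image_getVert_Icc {a b : V} {p : G.Walk a b} (hp : p.IsPath) {i j : ℕ}
    (hj : j ≤ p.length) : (p.getVert '' Icc i j).ncard = j + 1 - i := by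
  rw [(hp.getVert_injOn.mono fun _ h ↦ (Set.mem_Icc.mp h).2.trans hj).ncard_image,
    Set.ncard_Icc_nat]

end SimpleGraph.Walk

open scoped Function in
lemma Set.mul_card_le_ncard_of_pairwise_disjoint {α ι : Type*} [Finite α] [Fintype ι]
    {s : ι → Set α} {t : Set α} {n : ℕ} (hdisj : Pairwise (Disjoint on s)) (hsub : ∀ i, s i ⊆ t)
    (hcard : ∀ i, n ≤ (s i).ncard) : n * Fintype.card ι ≤ t.ncard :=
  calc n * Fintype.card ι = ∑ _ : ι, n := by simp [mul_comm]
    _ ≤ ∑ i, (s i).ncard := Finset.sum_le_sum fun i _ ↦ hcard i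
    _ = (⋃ i, s i).ncard := by
      rw [Set.ncard_iUnion_of_finite (fun i ↦ Set.toFinite _) hdisj, finsum_eq_sum_of_fintype]
    _ ≤ t.ncard := Set.ncard_le_ncard (Set.iUnion_subset hsub)

open SimpleGraph.Walk in
theorem far_apart_sets_many_distant_vertices_general
    {V : Type} [Fintype V] (G : SimpleGraph V)
    (m : ℕ) (X : Fin m → Set V)
    (D : ℕ)
    (hdist : ∀ i j, i ≠ j → ∀ x ∈ X i, ∀ y ∈ X j, ∀ w : G.Walk x y, D ≤ w.length)
    (a b : Fin m → V) (ha : ∀ i, a i ∈ X i) (hb : ∀ i, ∃ j, j ≠ i ∧ b i ∈ X j)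
    (Q : ∀ i, G.Walk (a i) (b i))
    (hQpath : ∀ i, (Q i).IsPath)
    (hQshort : ∀ i (x y : V), x ∈ X i → (∃ j, j ≠ i ∧ y ∈ X j) →
      ∀ w : G.Walk x y, (Q i).length ≤ w.length) :
    (∀ i j, i ≠ j →
        Disjoint ((Q i).getVert '' Set.Icc 2 ((D - 2) / 2))
          ((Q j).getVert '' Set.Icc 2 ((D - 2) / 2))) ∧
    (∀ i, (Q i).getVert '' Set.Icc 2 ((D - 2) / 2) ⊆
        {v | ∀ j, ∀ x ∈ X j, ∀ w : G.Walk v x, 2 ≤ w.length}) ∧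
    ((D - 4) / 2) * m ≤ ({v | ∀ j, ∀ x ∈ X j, ∀ w : G.Walk v x, 2 ≤ w.length} : Set V).ncard := by
  have hlen (i) : D ≤ (Q i).length := by
    obtain ⟨j, hji, hbj⟩ := hb i
    exact hdist i j hji.symm _ (ha i) _ hbj (Q i)
  have hdisj (i j) (hij : i ≠ j) : Disjoint ((Q i).getVert '' Set.Icc 2 ((D - 2) / 2))
      ((Q j).getVert '' Set.Icc 2 ((D - 2) / 2)) := by
    rw [Set.disjoint_left]
    rintro _ ⟨k, ⟨hk2, hk⟩, rfl⟩ ⟨l, ⟨-, hl⟩, hkl⟩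
    have h := (Q i).le_add_length_of_getVert (hdist i j hij _ (ha i) _ (ha j))
      (((Q j).take l).reverse.copy hkl rfl)
    rw [length_copy, length_reverse, take_length] at h
    omega
  have hZ (i) : (Q i).getVert '' Set.Icc 2 ((D - 2) / 2) ⊆
      {v | ∀ j, ∀ x ∈ X j, ∀ w : G.Walk v x, 2 ≤ w.length} := by
    rintro _ ⟨k, ⟨hk2, hk⟩, rfl⟩ j x hx w
    obtain rfl | hji := eq_or_ne j i
    · have := hlen j
      exact hk2.trans ((Q j).le_length_of_getVert_of_shortest
        (hQshort j x (b j) hx (hb j)) (by omega) w)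
    · have h := (Q i).le_add_length_of_getVert (hdist i j hji.symm _ (ha i) _ hx) w
      omega
  refine ⟨hdisj, hZ, ?_⟩
  simpa using Set.mul_card_le_ncard_of_pairwise_disjoint hdisj hZ fun i ↦ by
    have := hlen i
    rw [(hQpath i).ncard_image_getVert_Icc (by omega)]
    omega

/-- Let `X₁, …, X_m` (with `m ≥ 2`) be subsets of the vertex set of a
connected graph `G` with `d_G(X_i, X_j) ≥ D ≥ 6` for `i ≠ j`, where `D` is even. For each
`i` let `Q_i` be a shortest path from `X_i` to `⋃_{j ≠ i} X_j`, and let `Z` be the set of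
vertices at distance at least `2` from `⋃ᵢ X_i`. Then the subpaths `Q_i'` of `Q_i` given
by the vertices at positions `2` through `(D-2)/2` along `Q_i` are pairwise vertex-disjoint,
lie entirely in `Z`, and hence `|Z| ≥ ((D-4)/2) ⬝ m`. -/
theorem far_apart_sets_many_distant_vertices
    {V : Type} [Fintype V] (G : SimpleGraph V) (hconn : G.Connected)
    (m : ℕ) (hm : 2 ≤ m) (X : Fin m → Set V)
    (D : ℕ) (hD6 : 6 ≤ D) (hDeven : Even D)
    (hdist : ∀ i j, i ≠ j → ∀ x ∈ X i, ∀ y ∈ X j, ∀ w : G.Walk x y, D ≤ w.length)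
    (a b : Fin m → V) (ha : ∀ i, a i ∈ X i) (hb : ∀ i, ∃ j, j ≠ i ∧ b i ∈ X j)
    (Q : ∀ i, G.Walk (a i) (b i))
    (hQpath : ∀ i, (Q i).IsPath)
    (hQshort : ∀ i (x y : V), x ∈ X i → (∃ j, j ≠ i ∧ y ∈ X j) →
      ∀ w : G.Walk x y, (Q i).length ≤ w.length) :
    (∀ i j, i ≠ j →
        Disjoint ((Q i).getVert '' Set.Icc 2 ((D - 2) / 2))
          ((Q j).getVert '' Set.Icc 2 ((D - 2) / 2))) ∧
    (∀ i, (Q i).getVert '' Set.Icc 2 ((D - 2) / 2) ⊆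
        {v | ∀ j, ∀ x ∈ X j, ∀ w : G.Walk v x, 2 ≤ w.length}) ∧
    ((D - 4) / 2) * m ≤ ({v | ∀ j, ∀ x ∈ X j, ∀ w : G.Walk v x, 2 ≤ w.length} : Set V).ncard :=
  far_apart_sets_many_distant_vertices_general G m X D hdist a b ha hb Q hQpath hQshort
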